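/- Let P ⊂ ℝᵈ be a polytope containing the origin in its interior and let C be a connected component of the complement of the central arrangement {w^⊥ : w vertex of P°}. Then for all u₁, u₂ ∈ C, the set of vertices v of P such that π_{u₁}(v) is a vertex of π_{u₁}(P) equals the set of vertices v such that π_{u₂}(v) is a vertex of π_{u₂}(P). -/

import Mathlib

/-!
Fix `u` off every hyperplane `w^⊥`, `w` a vertex of `P°`, and a vertex `v` of `P` with dual facet
`F_v = {y ∈ P° | ⟪v, y⟫ = 1}`. In dimension at least two, `π_u v` is a vertex of `π_u P` exactly
when `F_v` has vertices strictly on both sides of `u^⊥`. If all of them lie on one side, say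
`⟪u, ·⟫ < 0` on `F_v`, then by compactness of `P°` the point `v + ε u` is interior to `P` for
small `ε > 0`, so `π_u v` is the projection of an interior point. If there are vertices on both
sides, tilting a functional that exposes `v` by one of them (both are maximised at `v`) yields an
exposing functional vanishing at `u`, which factors through `π_u` and exposes `π_u v`.
The signs of `⟪u, w⟫` are constant on a chamber, hence so is the criterion. In dimension at most
one every `π_u P` is a point.
-/

open RealInnerProductSpace

/-- The polar of a set: `K° = {y : ⟨x,y⟩ ≤ 1 for all x ∈ K}`. -/
def polarSet {d : ℕ} (K : Set (EuclideanSpace ℝ (Fin d))) : Set (EuclideanSpace ℝ (Fin d)) :=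
  {y | ∀ x ∈ K, ⟪x, y⟫ ≤ 1}

/-- Orthogonal projection onto the hyperplane `u^⊥`. -/
noncomputable def projHyp {d : ℕ} (u x : EuclideanSpace ℝ (Fin d)) :
    EuclideanSpace ℝ (Fin d) :=
  x - (⟪u, x⟫ / ⟪u, u⟫) • u

open Set Filter Topology Module

theorem IsCompact.exists_pos_forall_add_mul_neg {X : Type*} [TopologicalSpace X] {K : Set X}
    (hK : IsCompact K) {f g : X → ℝ} (hf : Continuous f) (hg : Continuous g)
    (hf_nonpos : ∀ y ∈ K, f y ≤ 0) (hg_neg : ∀ y ∈ K, f y = 0 → g y < 0) :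
    ∃ ε > 0, ∀ y ∈ K, f y + ε * g y < 0 := by
  set K' := K ∩ {y | 0 ≤ g y}
  rcases K'.eq_empty_or_nonempty with hK' | hK'
  · refine ⟨1, one_pos, fun y hy => ?_⟩
    have : g y < 0 := not_le.1 fun h => hK'.subset ⟨hy, h⟩
    linarith [hf_nonpos y hy]
  obtain ⟨y₁, ⟨hy₁K, hy₁g⟩, hy₁max⟩ :=
    (hK.inter_right (isClosed_le continuous_const hg)).exists_isMaxOn hK' hf.continuousOn
  have hm : f y₁ < 0 :=
    (hf_nonpos y₁ hy₁K).lt_of_ne fun h => (hg_neg y₁ hy₁K h).not_ge hy₁g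
  obtain ⟨M, hM⟩ := hK.bddAbove_image hg.continuousOn
  -- where `g ≥ 0`, `f ≤ f y₁ < 0` and this choice of `ε` keeps `ε * g ≤ -f y₁ / 2`
  have hε : 0 < -f y₁ / (2 * (|M| + 1)) := div_pos (by linarith) (by positivity)
  refine ⟨-f y₁ / (2 * (|M| + 1)), hε, fun y hy => ?_⟩
  rcases lt_or_ge (g y) 0 with hgy | hgy
  · nlinarith [hf_nonpos y hy]
  · have hgM : g y ≤ |M| + 1 := by linarith [hM ⟨y, hy, rfl⟩, le_abs_self M]
    have hεg : -f y₁ / (2 * (|M| + 1)) * g y ≤ -f y₁ / 2 := by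
      calc -f y₁ / (2 * (|M| + 1)) * g y ≤ -f y₁ / (2 * (|M| + 1)) * (|M| + 1) := by
            gcongr
        _ = -f y₁ / 2 := by field_simp
    linarith [isMaxOn_iff.1 hy₁max y ⟨hy, hgy⟩]

theorem IsPreconnected.pos_iff_pos {X : Type*} [TopologicalSpace X] {C : Set X}
    (hC : IsPreconnected C) {f : X → ℝ} (hf : ContinuousOn f C) (hf₀ : ∀ x ∈ C, f x ≠ 0)
    {a b : X} (ha : a ∈ C) (hb : b ∈ C) : 0 < f a ↔ 0 < f b := by
  suffices key : ∀ a ∈ C, ∀ b ∈ C, 0 < f a → 0 < f b from ⟨key a ha b hb, key b hb a ha⟩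
  intro a ha b hb hfa
  by_contra! hfb
  obtain ⟨x, hx, hx0⟩ := hC.intermediate_value hb ha hf ⟨hfb, hfa.le⟩
  exact hf₀ x hx hx0

theorem mem_exposedPoints_image_of_forall_lt {X G : Type*} [NormedAddCommGroup G]
    [NormedSpace ℝ G] {A : Set X} {π : X → G} {v : X} (hv : v ∈ A) (l : StrongDual ℝ G)
    (hl : ∀ x ∈ A, x ≠ v → l (π x) < l (π v)) : π v ∈ (π '' A).exposedPoints ℝ := by
  refine ⟨mem_image_of_mem π hv, l, ?_⟩
  rintro _ ⟨x, hx, rfl⟩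
  by_cases hxv : x = v
  · simp [hxv]
  · exact ⟨(hl x hx hxv).le, fun h => absurd h (hl x hx hxv).not_ge⟩

theorem convex_setOf_lt_or_eq {F : Type*} [AddCommGroup F] [Module ℝ F] (l : F →ₗ[ℝ] ℝ)
    (v : F) : Convex ℝ {x | l x < l v ∨ x = v} := by
  intro a ha b hb s t hs ht hst
  rcases ha with ha | rfl <;> rcases hb with hb | rfl
  · exact Or.inl (convex_halfSpace_lt l.isLinear _ ha hb hs ht hst)
  · rcases hs.eq_or_lt with rfl | hs
    · right; simp [show t = 1 by linarith]
    · left; simp only [map_add, map_smul, smul_eq_mul]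
      linear_combination mul_lt_mul_of_pos_left ha hs + l b * hst
  · rcases ht.eq_or_lt with rfl | ht
    · right; simp [show s = 1 by linarith]
    · left; simp only [map_add, map_smul, smul_eq_mul]
      linear_combination mul_lt_mul_of_pos_left hb ht + l a * hst
  · exact Or.inr (Convex.combo_self hst _)

section NormedSpace

variable {F : Type*} [NormedAddCommGroup F] [NormedSpace ℝ F]

theorem IsCompact.forall_neg_of_forall_extremePoints_neg {T : Set F} (hT : IsCompact T)
    (l : StrongDual ℝ F) (hl : ∀ w ∈ T.extremePoints ℝ, l w < 0) : ∀ y ∈ T, l y < 0 := by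
  intro y hy
  obtain ⟨z, hzT, hz⟩ := hT.exists_isMaxOn ⟨y, hy⟩ l.continuous.continuousOn
  have hB := ContinuousLinearMap.toExposed.isExposed (𝕜 := ℝ) (l := l) (A := T)
  obtain ⟨w, hw⟩ := (hB.isCompact hT).extremePoints_nonempty ⟨z, hzT, fun x hx => hz hx⟩
  exact (hw.1.2 y hy).trans_lt (hl w (hB.isExtreme.extremePoints_subset_extremePoints hw))

theorem exists_forall_lt_of_mem_extremePoints_convexHull {s : Set F} (hs : s.Finite) {v : F}
    (hv : v ∈ (convexHull ℝ s).extremePoints ℝ) :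
    ∃ l : StrongDual ℝ F, ∀ x ∈ convexHull ℝ s, x ≠ v → l x < l v := by
  have hv_notMem : v ∉ convexHull ℝ (s \ {v}) := fun h =>
    ((convex_convexHull ℝ s).mem_extremePoints_iff_mem_sdiff_convexHull_sdiff.1 hv).2
      (convexHull_mono (sdiff_subset_sdiff_left (subset_convexHull ℝ s)) h)
  obtain ⟨l, r, hlr, hrv⟩ := geometric_hahn_banach_closed_point (convex_convexHull ℝ _)
    (hs.sdiff.isClosed_convexHull ℝ) hv_notMem
  have hsub : convexHull ℝ s ⊆ {x | l x < l v ∨ x = v} := by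
    refine convexHull_min (fun y hy => ?_) (convex_setOf_lt_or_eq l.toLinearMap v)
    by_cases hyv : y = v
    · exact Or.inr hyv
    · exact Or.inl ((hlr y (subset_convexHull ℝ _ ⟨hy, hyv⟩)).trans hrv)
  exact ⟨l, fun x hx hxv => (hsub hx).resolve_right hxv⟩

theorem exists_forall_lt_of_forall_le_of_neg_of_pos {A : Set F} {u v : F}
    {l₀ m₁ m₂ : StrongDual ℝ F} (hl₀ : ∀ x ∈ A, x ≠ v → l₀ x < l₀ v)
    (hm₁ : ∀ x ∈ A, m₁ x ≤ m₁ v) (hm₂ : ∀ x ∈ A, m₂ x ≤ m₂ v) (hu₁ : 0 < m₁ u) (hu₂ : m₂ u < 0) :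
    ∃ l : StrongDual ℝ F, l u = 0 ∧ ∀ x ∈ A, x ≠ v → l x < l v := by
  have tilt : ∀ m : StrongDual ℝ F, (∀ x ∈ A, m x ≤ m v) → m u ≠ 0 → 0 ≤ -l₀ u / m u →
      ∃ l : StrongDual ℝ F, l u = 0 ∧ ∀ x ∈ A, x ≠ v → l x < l v := by
    intro m hm hmu hc
    refine ⟨l₀ + (-l₀ u / m u) • m, by simp [hmu], fun x hx hxv => ?_⟩
    simpa using add_lt_add_of_lt_of_le (hl₀ x hx hxv) (mul_le_mul_of_nonneg_left (hm x hx) hc)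
  rcases le_or_gt (l₀ u) 0 with h | h
  · exact tilt m₁ hm₁ hu₁.ne' (div_nonneg (neg_nonneg.2 h) hu₁.le)
  · exact tilt m₂ hm₂ hu₂.ne (div_nonneg_of_nonpos (by linarith) hu₂.le)

theorem LinearMap.image_notMem_extremePoints_of_mem_interior {G : Type*} [AddCommGroup G]
    [Module ℝ G] (f : F →ₗ[ℝ] G) {A : Set F} {x z : F} (hx : x ∈ interior A) (hz : f z ≠ 0) :
    f x ∉ (f '' A).extremePoints ℝ := by
  have hA : ∀ᶠ t in 𝓝 (0 : ℝ), x + t • z ∈ A ∧ x - t • z ∈ A := by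
    have hA := mem_interior_iff_mem_nhds.1 hx
    refine .and ?_ ?_
    · exact ((continuous_const.add (continuous_id.smul continuous_const)).tendsto' 0 x
        (by simp)).eventually hA
    · exact ((continuous_const.sub (continuous_id.smul continuous_const)).tendsto' 0 x
        (by simp)).eventually hA
  obtain ⟨t, ⟨hadd, hsub⟩, ht⟩ :=
    ((hA.filter_mono nhdsWithin_le_nhds).and (self_mem_nhdsWithin (s := {0}ᶜ))).exists
  intro hext
  have hseg : f x ∈ openSegment ℝ (f (x + t • z)) (f (x - t • z)) :=
    ⟨1 / 2, 1 / 2, by norm_num, by norm_num, by norm_num, by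
      simp only [map_add, map_sub, map_smul]; module⟩
  have := hext.2 ⟨_, hadd, rfl⟩ ⟨_, hsub, rfl⟩ hseg
  simp only [map_add, map_smul, add_eq_left, smul_eq_zero] at this
  exact this.elim ht hz

end NormedSpace

section Euclidean

variable {d : ℕ}

local notation "E" => EuclideanSpace ℝ (Fin d)

theorem exists_ne_zero_inner_eq_zero (hd : 2 ≤ d) (u : E) : ∃ z ≠ 0, ⟪u, z⟫ = 0 := by
  have hdim := (ℝ ∙ u).finrank_add_finrank_orthogonal
  have hspan : finrank ℝ (ℝ ∙ u) ≤ 1 := by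
    simpa using finrank_span_le_card (R := ℝ) ({u} : Set E)
  rw [finrank_euclideanSpace_fin] at hdim
  obtain ⟨z, hz, hz0⟩ := Submodule.exists_mem_ne_zero_of_ne_bot fun h : (ℝ ∙ u)ᗮ = ⊥ => by
    rw [h, finrank_bot] at hdim; omega
  exact ⟨z, hz0, Submodule.mem_orthogonal_singleton_iff_inner_right.1 hz⟩

theorem orthogonal_span_singleton_eq_bot (hd : d < 2) {u : E} (hu : u ≠ 0) : (ℝ ∙ u)ᗮ = ⊥ := by
  have hdim := (ℝ ∙ u).finrank_add_finrank_orthogonal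
  rw [finrank_euclideanSpace_fin, finrank_span_singleton hu] at hdim
  exact Submodule.finrank_eq_zero.1 (by omega)

theorem polarSet_anti {K L : Set E} (h : K ⊆ L) : polarSet L ⊆ polarSet K :=
  fun _ hy x hx => hy x (h hx)

theorem isClosed_polarSet (K : Set E) : IsClosed (polarSet K) := by
  have : polarSet K = ⋂ x ∈ K, {y | ⟪x, y⟫ ≤ 1} := by ext; simp [polarSet]
  rw [this]
  exact isClosed_biInter fun x _ => isClosed_le (by fun_prop) continuous_const

theorem polarSet_closedBall_subset {r : ℝ} (hr : 0 < r) :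
    polarSet (Metric.closedBall (0 : E) r) ⊆ Metric.closedBall 0 r⁻¹ := by
  intro y hy
  rw [mem_closedBall_zero_iff]
  rcases eq_or_ne y 0 with rfl | hy0
  · simp [hr.le]
  have hny : 0 < ‖y‖ := norm_pos_iff.2 hy0
  have h := hy ((r / ‖y‖) • y) (by
    rw [mem_closedBall_zero_iff, norm_smul, Real.norm_of_nonneg (by positivity),
      div_mul_cancel₀ _ hny.ne'])
  rw [real_inner_smul_left, real_inner_self_eq_norm_sq] at h
  calc ‖y‖ = r⁻¹ * (r / ‖y‖ * ‖y‖ ^ 2) := by field_simp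
    _ ≤ r⁻¹ * 1 := by gcongr
    _ = r⁻¹ := mul_one _

theorem isCompact_polarSet {K : Set E} (h0 : (0 : E) ∈ interior K) : IsCompact (polarSet K) := by
  obtain ⟨r, hr, hrK⟩ := Metric.nhds_basis_closedBall.mem_iff.1 (mem_interior_iff_mem_nhds.1 h0)
  exact (isCompact_closedBall 0 r⁻¹).of_isClosed_subset (isClosed_polarSet K)
    ((polarSet_anti hrK).trans (polarSet_closedBall_subset hr))

theorem mem_of_forall_mem_polarSet_inner_le {K : Set E} (hK : IsClosed K) (hKc : Convex ℝ K)
    (h0 : (0 : E) ∈ K) {x : E} (hx : ∀ y ∈ polarSet K, ⟪x, y⟫ ≤ 1) : x ∈ K := by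
  by_contra hxK
  obtain ⟨f, r, hfr, hrx⟩ := geometric_hahn_banach_closed_point hKc hK hxK
  have hr : 0 < r := by simpa using hfr 0 h0
  set y : E := r⁻¹ • (InnerProductSpace.toDual ℝ E).symm f
  have hy : ∀ a, ⟪a, y⟫ = r⁻¹ * f a := fun a => by
    rw [real_inner_smul_right, real_inner_comm, InnerProductSpace.toDual_symm_apply]
  have hyK : y ∈ polarSet K := fun a ha => by
    rw [hy, inv_mul_le_iff₀ hr, mul_one]; exact (hfr a ha).le
  have := hx y hyK
  rw [hy, inv_mul_le_iff₀ hr, mul_one] at this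
  linarith

theorem mem_interior_of_forall_mem_polarSet_inner_lt {K : Set E} (hK : IsClosed K)
    (hKc : Convex ℝ K) (h0 : (0 : E) ∈ interior K) {x : E}
    (hx : ∀ y ∈ polarSet K, ⟪x, y⟫ < 1) : x ∈ interior K := by
  have hnhds : ∀ᶠ x' in 𝓝 x, ∀ y ∈ polarSet K, ⟪x', y⟫ < 1 :=
    (isCompact_polarSet h0).eventually_forall_of_forall_eventually fun y hy =>
      (isOpen_lt (continuous_fst.inner continuous_snd) continuous_const).mem_nhds (hx y hy)
  exact mem_interior_iff_mem_nhds.2 <| hnhds.mono fun x' hx' =>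
    mem_of_forall_mem_polarSet_inner_le hK hKc (interior_subset h0) fun y hy => (hx' y hy).le

/-- The face of `K°` exposed by `v`; for a vertex `v` of a polytope `P` it is the facet of `P°`
dual to `v`. -/
def polarFace (K : Set E) (v : E) : Set E :=
  {y ∈ polarSet K | ⟪v, y⟫ = 1}

theorem isExposed_polarFace {K : Set E} {v : E} (hv : v ∈ K) :
    IsExposed ℝ (polarSet K) (polarFace K v) := by
  rintro ⟨y, hy, hvy⟩
  refine ⟨innerSL ℝ v, Set.ext fun z => ⟨fun hz => ⟨hz.1, fun w hw => ?_⟩, fun hz => ⟨hz.1, ?_⟩⟩⟩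
  · simpa [innerSL_apply_apply, hz.2] using hw v hv
  · exact le_antisymm (hz.1 v hv) (by simpa [innerSL_apply_apply, hvy] using hz.2 y hy)

theorem forall_mem_polarFace_inner_neg {K : Set E} (h0 : (0 : E) ∈ interior K) {u v : E}
    (hv : v ∈ K) (hu : ∀ w ∈ (polarSet K).extremePoints ℝ, w ∈ polarFace K v → ⟪u, w⟫ < 0) :
    ∀ y ∈ polarFace K v, ⟪u, y⟫ < 0 :=
  have hface := isExposed_polarFace hv
  (hface.isCompact (isCompact_polarSet h0)).forall_neg_of_forall_extremePoints_neg (innerSL ℝ u)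
    fun w hw => hu w (hface.isExtreme.extremePoints_subset_extremePoints hw) hw.1

theorem exists_pos_add_smul_mem_interior {K : Set E} (hK : IsClosed K) (hKc : Convex ℝ K)
    (h0 : (0 : E) ∈ interior K) {u v : E} (hv : v ∈ K)
    (hu : ∀ y ∈ polarFace K v, ⟪u, y⟫ < 0) : ∃ ε > (0 : ℝ), v + ε • u ∈ interior K := by
  obtain ⟨ε, hε, h⟩ := (isCompact_polarSet h0).exists_pos_forall_add_mul_neg
    (f := fun y => ⟪v, y⟫ - 1) (g := fun y => ⟪u, y⟫) (by fun_prop) (by fun_prop)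
    (fun y hy => sub_nonpos.2 (hy v hv)) (fun y hy h => hu y ⟨hy, by linarith⟩)
  refine ⟨ε, hε, mem_interior_of_forall_mem_polarSet_inner_lt hK hKc h0 fun y hy => ?_⟩
  rw [inner_add_left, real_inner_smul_left]
  linarith [h y hy]

theorem isLinearMap_projHyp (u : E) : IsLinearMap ℝ (projHyp u) where
  map_add x y := by simp only [projHyp, inner_add_right, add_div, add_smul]; abel
  map_smul t x := by simp only [projHyp, real_inner_smul_right, smul_sub, mul_div_assoc, mul_smul]

theorem projHyp_self (u : E) : projHyp u u = 0 := by
  rcases eq_or_ne u 0 with rfl | hu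
  · simp [projHyp]
  · rw [projHyp, div_self (inner_self_ne_zero.2 hu), one_smul, sub_self]

theorem projHyp_add_smul_self (u x : E) (t : ℝ) : projHyp u (x + t • u) = projHyp u x := by
  rw [(isLinearMap_projHyp u).map_add, (isLinearMap_projHyp u).map_smul, projHyp_self,
    smul_zero, add_zero]

theorem projHyp_of_inner_eq_zero {u z : E} (h : ⟪u, z⟫ = 0) : projHyp u z = z := by
  simp [projHyp, h]

theorem projHyp_neg (u : E) : projHyp (-u) = projHyp u := by
  funext x
  simp [projHyp, neg_div]

theorem inner_projHyp_self (u x : E) : ⟪u, projHyp u x⟫ = 0 := by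
  rcases eq_or_ne u 0 with rfl | hu
  · simp
  · rw [projHyp, inner_sub_right, real_inner_smul_right,
      div_mul_cancel₀ _ (inner_self_ne_zero.2 hu), sub_self]

theorem map_projHyp_of_map_eq_zero {u : E} (l : StrongDual ℝ E) (hl : l u = 0) (x : E) :
    l (projHyp u x) = l x := by
  simp [projHyp, hl]

theorem projHyp_notMem_extremePoints {K : Set E} (hK : IsClosed K) (hKc : Convex ℝ K)
    (h0 : (0 : E) ∈ interior K) {u v z : E} (hv : v ∈ K) (hz : z ≠ 0) (hzu : ⟪u, z⟫ = 0)
    (hu : ∀ w ∈ (polarSet K).extremePoints ℝ, w ∈ polarFace K v → ⟪u, w⟫ < 0) :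
    projHyp u v ∉ (projHyp u '' K).extremePoints ℝ := by
  obtain ⟨ε, -, hε⟩ := exists_pos_add_smul_mem_interior hK hKc h0 hv
    (forall_mem_polarFace_inner_neg h0 hv hu)
  rw [← projHyp_add_smul_self u v ε]
  exact (isLinearMap_projHyp u).mk'.image_notMem_extremePoints_of_mem_interior (z := z) hε
    (by simpa [projHyp_of_inner_eq_zero hzu] using hz)

theorem exists_polarFace_inner_pos_of_projHyp_mem_extremePoints {K : Set E} (hK : IsClosed K)
    (hKc : Convex ℝ K) (h0 : (0 : E) ∈ interior K) {u v : E} (hv : v ∈ K)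
    (hperp : ∃ z ≠ 0, ⟪u, z⟫ = 0) (hu : ∀ w ∈ (polarSet K).extremePoints ℝ, ⟪u, w⟫ ≠ 0)
    (hext : projHyp u v ∈ (projHyp u '' K).extremePoints ℝ) :
    ∃ w ∈ (polarSet K).extremePoints ℝ, w ∈ polarFace K v ∧ 0 < ⟪u, w⟫ := by
  by_contra! h
  obtain ⟨z, hz, hzu⟩ := hperp
  exact projHyp_notMem_extremePoints hK hKc h0 hv hz hzu
    (fun w hw hwv => (h w hw hwv).lt_of_ne (hu w hw)) hext

theorem projHyp_mem_extremePoints_of_mem_polarFace {V : Finset E} {P : Set E}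
    (hP : P = convexHull ℝ (V : Set E)) {u v w₁ w₂ : E} (hv : v ∈ P.extremePoints ℝ)
    (hw₁ : w₁ ∈ polarFace P v) (hw₂ : w₂ ∈ polarFace P v) (h₁ : 0 < ⟪u, w₁⟫)
    (h₂ : ⟪u, w₂⟫ < 0) : projHyp u v ∈ (projHyp u '' P).extremePoints ℝ := by
  subst hP
  obtain ⟨l₀, hl₀⟩ := exists_forall_lt_of_mem_extremePoints_convexHull V.finite_toSet hv
  have hsupport : ∀ w ∈ polarFace (convexHull ℝ (V : Set E)) v,
      ∀ x ∈ convexHull ℝ (V : Set E), innerSL ℝ w x ≤ innerSL ℝ w v := fun w hw x hx => by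
    rw [innerSL_apply_apply, innerSL_apply_apply, real_inner_comm x, real_inner_comm v, hw.2]
    exact hw.1 x hx
  obtain ⟨l, hlu, hl⟩ := exists_forall_lt_of_forall_le_of_neg_of_pos (u := u) hl₀
    (hsupport w₁ hw₁) (hsupport w₂ hw₂) (by rwa [innerSL_apply_apply, real_inner_comm])
    (by rwa [innerSL_apply_apply, real_inner_comm])
  refine exposedPoints_subset_extremePoints (mem_exposedPoints_image_of_forall_lt hv.1 l ?_)
  intro x hx hxv
  rw [map_projHyp_of_map_eq_zero l hlu, map_projHyp_of_map_eq_zero l hlu]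
  exact hl x hx hxv

theorem projHyp_mem_extremePoints_iff {V : Finset E} {P : Set E}
    (hP : P = convexHull ℝ (V : Set E)) (h0 : (0 : E) ∈ interior P) {u v : E}
    (hperp : ∃ z ≠ 0, ⟪u, z⟫ = 0) (hu : ∀ w ∈ (polarSet P).extremePoints ℝ, ⟪u, w⟫ ≠ 0)
    (hv : v ∈ P.extremePoints ℝ) :
    projHyp u v ∈ (projHyp u '' P).extremePoints ℝ ↔
      (∃ w ∈ (polarSet P).extremePoints ℝ, w ∈ polarFace P v ∧ 0 < ⟪u, w⟫) ∧
        (∃ w ∈ (polarSet P).extremePoints ℝ, w ∈ polarFace P v ∧ ⟪u, w⟫ < 0) := by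
  have hPc : IsClosed P := hP ▸ V.finite_toSet.isClosed_convexHull ℝ
  have hPconv : Convex ℝ P := hP ▸ convex_convexHull ℝ _
  refine ⟨fun hext => ⟨?_, ?_⟩, ?_⟩
  · exact exists_polarFace_inner_pos_of_projHyp_mem_extremePoints hPc hPconv h0 hv.1 hperp hu hext
  · obtain ⟨z, hz, hzu⟩ := hperp
    simpa using exists_polarFace_inner_pos_of_projHyp_mem_extremePoints (u := -u) hPc hPconv h0
      hv.1 ⟨z, hz, by simpa using hzu⟩ (by simpa using hu) (by rwa [projHyp_neg])
  · rintro ⟨⟨w₁, -, hw₁, h₁⟩, ⟨w₂, -, hw₂, h₂⟩⟩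
    exact projHyp_mem_extremePoints_of_mem_polarFace hP hv hw₁ hw₂ h₁ h₂

theorem projHyp_mem_extremePoints_of_lt_two (hd : d < 2) {K : Set E} {u v : E}
    (hv : v ∈ K.extremePoints ℝ) : projHyp u v ∈ (projHyp u '' K).extremePoints ℝ := by
  rcases eq_or_ne u 0 with rfl | hu
  · rwa [show projHyp (0 : E) = id from funext fun x => by simp [projHyp], image_id]
  have hzero : ∀ x, projHyp u x = 0 := fun x => by
    simpa [orthogonal_span_singleton_eq_bot hd hu] using
      Submodule.mem_orthogonal_singleton_iff_inner_right.2 (inner_projHyp_self u x)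
  rw [show projHyp u '' K = {0} by simpa [hzero] using (nonempty_of_mem hv.1).image_const 0,
    extremePoints_singleton, hzero]
  rfl

end Euclidean

/-- For a polytope `P` with the origin in its interior and two directions `u₁, u₂` in the same
connected component of the complement of the central arrangement `{w^⊥ : w vertex of P°}`,
the set of vertices of `P` projecting to vertices of `π_{u₁}(P)` equals the set of vertices of
`P` projecting to vertices of `π_{u₂}(P)`. -/
theorem same_projected_vertices_of_same_chamber {d : ℕ} (V : Finset (EuclideanSpace ℝ (Fin d)))
    (P : Set (EuclideanSpace ℝ (Fin d)))
    (hP : P = convexHull ℝ (V : Set (EuclideanSpace ℝ (Fin d))))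
    (h0 : (0 : EuclideanSpace ℝ (Fin d)) ∈ interior P)
    (S : Set (EuclideanSpace ℝ (Fin d)))
    (hS : S = {x | ∀ w ∈ Set.extremePoints ℝ (polarSet P), ⟪x, w⟫ ≠ 0})
    (u₁ u₂ : EuclideanSpace ℝ (Fin d)) (hu₁ : u₁ ∈ S)
    (hu₂ : u₂ ∈ connectedComponentIn S u₁) :
    {v ∈ Set.extremePoints ℝ P | projHyp u₁ v ∈ Set.extremePoints ℝ (projHyp u₁ '' P)} =
      {v ∈ Set.extremePoints ℝ P | projHyp u₂ v ∈ Set.extremePoints ℝ (projHyp u₂ '' P)} := by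
  have hC := connectedComponentIn_subset S u₁
  subst hS
  have hsign (f : EuclideanSpace ℝ (Fin d) → ℝ) (hf : Continuous f)
      (hf₀ : ∀ x ∈ connectedComponentIn _ u₁, f x ≠ 0) : 0 < f u₁ ↔ 0 < f u₂ :=
    isPreconnected_connectedComponentIn.pos_iff_pos hf.continuousOn hf₀
      (mem_connectedComponentIn hu₁) hu₂
  ext v
  refine and_congr_right fun hv => ?_
  rcases lt_or_ge d 2 with hd | hd
  · exact iff_of_true (projHyp_mem_extremePoints_of_lt_two hd hv)
      (projHyp_mem_extremePoints_of_lt_two hd hv)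
  rw [projHyp_mem_extremePoints_iff hP h0 (exists_ne_zero_inner_eq_zero hd u₁) hu₁ hv,
    projHyp_mem_extremePoints_iff hP h0 (exists_ne_zero_inner_eq_zero hd u₂) (hC hu₂) hv]
  refine and_congr (exists_congr fun w => and_congr_right fun hw => and_congr_right' ?_)
    (exists_congr fun w => and_congr_right fun hw => and_congr_right' ?_)
  · exact hsign (⟪·, w⟫) (by fun_prop) fun x hx => hC hx w hw
  · simpa using hsign (-⟪·, w⟫) (by fun_prop) fun x hx => neg_ne_zero.2 (hC hx w hw)
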